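/- arXiv:1909.05334 — 2 statements merged into one kernel-verified Lean document; each statement's English description precedes it below -/
import Mathlib

section
/- If {x_n} is an approximative atomic system for K ∈ L(X) in a Banach space X with respect to X_d, then there exists a bounded linear operator T : X_d → X with T(e_n) = x_n for all n, and range(K**) ⊆ range(T**), where K** and T** are the second adjoints. -/
open Filter Topology

/-- The Banach-space adjoint of a bounded operator. -/
noncomputable def adjB {X Y : Type*} [NormedAddCommGroup X] [NormedSpace ℝ X]
    [NormedAddCommGroup Y] [NormedSpace ℝ Y] (T : X →L[ℝ] Y) :
    (Y →L[ℝ] ℝ) →L[ℝ] (X →L[ℝ] ℝ) :=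
  (ContinuousLinearMap.compL ℝ X Y ℝ).flip T

/-!
By duality, the Bessel property gives `‖∑ a k • x k‖ ≤ A * ‖∑ a k • e k‖` for finite sums.
Hence the partial synthesis sums `∑_{k < N} coord k c • x k` are Cauchy along the basis expansion
of `c`, and by Banach–Steinhaus their limit is a bounded operator `T` with `T (e n) = x n`.
Applying `T` to the approximations of `S z` shows `K = T ∘ S`, so `K** = T** ∘ S**`.
-/

section Adjoint

variable {X Y Z : Type*} [NormedAddCommGroup X] [NormedSpace ℝ X]
  [NormedAddCommGroup Y] [NormedSpace ℝ Y] [NormedAddCommGroup Z] [NormedSpace ℝ Z]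

lemma adjB_comp (T : Y →L[ℝ] Z) (S : X →L[ℝ] Y) :
    adjB (T.comp S) = (adjB S).comp (adjB T) := by
  ext f x; rfl

lemma range_adjB_adjB_comp_subset (T : Y →L[ℝ] Z) (S : X →L[ℝ] Y) :
    Set.range (adjB (adjB (T.comp S))) ⊆ Set.range (adjB (adjB T)) := by
  rw [adjB_comp, adjB_comp, ContinuousLinearMap.coe_comp]
  exact Set.range_comp_subset_range _ _

end Adjoint

lemma cauchySeq_of_norm_sub_le {E F : Type*} [SeminormedAddCommGroup E]
    [SeminormedAddCommGroup F] {u : ℕ → E} {v : ℕ → F} {C : ℝ} (hC : 0 ≤ C)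
    (hv : CauchySeq v) (h : ∀ M N, M ≤ N → ‖u N - u M‖ ≤ C * ‖v N - v M‖) :
    CauchySeq u := by
  rw [Metric.cauchySeq_iff'] at hv ⊢
  intro ε hε
  obtain ⟨N₀, hN₀⟩ := hv (ε / (C + 1)) (by positivity)
  refine ⟨N₀, fun N hN => ?_⟩
  have hv' : ‖v N - v N₀‖ < ε / (C + 1) := by simpa only [dist_eq_norm] using hN₀ N hN
  rw [dist_eq_norm]
  calc ‖u N - u N₀‖ ≤ C * ‖v N - v N₀‖ := h N₀ N hN
    _ ≤ C * (ε / (C + 1)) := by gcongr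
    _ < ε := by
      rw [mul_div_assoc', div_lt_iff₀ (by positivity)]
      linarith

section Synthesis

variable {X Xd : Type*} [NormedAddCommGroup X] [NormedSpace ℝ X]
  [NormedAddCommGroup Xd] [NormedSpace ℝ Xd]
  {coord : ℕ → (Xd →L[ℝ] ℝ)} {e : ℕ → Xd} {x : ℕ → X}

variable (coord x) in
noncomputable def partialSynthesis (N : ℕ) : Xd →L[ℝ] X :=
  ∑ k ∈ Finset.range N, (coord k).smulRight (x k)

lemma partialSynthesis_apply (N : ℕ) (c : Xd) :
    partialSynthesis coord x N c = ∑ k ∈ Finset.range N, coord k c • x k := by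
  simp [partialSynthesis]

lemma partialSynthesis_apply_of_lt
    (hcoord_e : ∀ k n, coord k (e n) = if k = n then (1 : ℝ) else 0) {n N : ℕ} (hn : n < N) :
    partialSynthesis coord x N (e n) = x n := by
  simp [partialSynthesis_apply, hcoord_e, ite_smul, hn]

lemma norm_sum_smul_le_of_bessel {A : ℝ}
    (hBessel : ∀ f : X →L[ℝ] ℝ, ∃ g : Xd →L[ℝ] ℝ, (∀ n, g (e n) = f (x n)) ∧ ‖g‖ ≤ A * ‖f‖)
    (s : Finset ℕ) (a : ℕ → ℝ) :
    ‖∑ k ∈ s, a k • x k‖ ≤ max A 0 * ‖∑ k ∈ s, a k • e k‖ := by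
  refine NormedSpace.norm_le_dual_bound ℝ _ (by positivity) fun f => ?_
  obtain ⟨g, hge, hg⟩ := hBessel f
  have hfg : f (∑ k ∈ s, a k • x k) = g (∑ k ∈ s, a k • e k) := by simp [map_sum, hge]
  rw [hfg]
  calc ‖g (∑ k ∈ s, a k • e k)‖ ≤ ‖g‖ * ‖∑ k ∈ s, a k • e k‖ := g.le_opNorm _
    _ ≤ max A 0 * ‖f‖ * ‖∑ k ∈ s, a k • e k‖ := by
      gcongr
      exact hg.trans (by gcongr; exact le_max_left A 0)
    _ = max A 0 * ‖∑ k ∈ s, a k • e k‖ * ‖f‖ := by ring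

theorem exists_clm_apply_eq_of_norm_sum_smul_le [CompleteSpace X] [CompleteSpace Xd] {C : ℝ}
    (hC : 0 ≤ C) (hcoord_e : ∀ k n, coord k (e n) = if k = n then (1 : ℝ) else 0)
    (hbasis : ∀ c : Xd,
      Tendsto (fun N => ∑ k ∈ Finset.range N, coord k c • e k) atTop (nhds c))
    (hdom : ∀ (s : Finset ℕ) (a : ℕ → ℝ), ‖∑ k ∈ s, a k • x k‖ ≤ C * ‖∑ k ∈ s, a k • e k‖) :
    ∃ T : Xd →L[ℝ] X, ∀ n, T (e n) = x n := by
  have hcauchy (c : Xd) : CauchySeq fun N => partialSynthesis coord x N c :=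
    cauchySeq_of_norm_sub_le hC (hbasis c).cauchySeq fun M N hMN => by
      simp only [partialSynthesis_apply, ← Finset.sum_Ico_eq_sub _ hMN]
      exact hdom _ _
  choose Tc hTc using fun c => cauchySeq_tendsto_of_complete (hcauchy c)
  refine ⟨continuousLinearMapOfTendsto _ (tendsto_pi_nhds.2 hTc), fun n => ?_⟩
  refine tendsto_nhds_unique (hTc (e n)) (tendsto_atTop_of_eventually_const (i₀ := n + 1) ?_)
  exact fun N hN => partialSynthesis_apply_of_lt hcoord_e hN

end Synthesis

lemma eq_comp_of_tendsto_sum_smul {Y X Xd : Type*} [NormedAddCommGroup Y] [NormedSpace ℝ Y]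
    [NormedAddCommGroup X] [NormedSpace ℝ X] [NormedAddCommGroup Xd] [NormedSpace ℝ Xd]
    {e : ℕ → Xd} {x : ℕ → X} {T : Xd →L[ℝ] X} (hTe : ∀ n, T (e n) = x n)
    {K : Y →L[ℝ] X} {S : Y →L[ℝ] Xd} {m : ℕ → ℕ} {h : ℕ → ℕ → (Y →L[ℝ] ℝ)}
    (hS : ∀ z : Y,
      Tendsto (fun n => ∑ i ∈ Finset.range (m n), h n i z • e i) atTop (nhds (S z)))
    (hK : ∀ z : Y,
      Tendsto (fun n => ∑ i ∈ Finset.range (m n), h n i z • x i) atTop (nhds (K z))) :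
    K = T.comp S := by
  ext z
  refine tendsto_nhds_unique (hK z) ?_
  simpa [Function.comp_def, map_sum, hTe] using (T.continuous.tendsto (S z)).comp (hS z)

theorem stmt13_general {X Xd : Type*}
    [NormedAddCommGroup X] [NormedSpace ℝ X] [CompleteSpace X]
    [NormedAddCommGroup Xd] [NormedSpace ℝ Xd] [CompleteSpace Xd]
    (coord : ℕ → (Xd →L[ℝ] ℝ)) (e : ℕ → Xd)
    (hcoord_e : ∀ k n, coord k (e n) = if k = n then (1 : ℝ) else 0)
    (hbasis : ∀ c : Xd,
      Tendsto (fun N => ∑ k ∈ Finset.range N, coord k c • e k) atTop (nhds c))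
    (x : ℕ → X) (K : X →L[ℝ] X)
    -- {x_n} is a Bessel sequence for X with respect to Xd
    (A : ℝ) (hBessel : ∀ f : X →L[ℝ] ℝ, ∃ g : Xd →L[ℝ] ℝ,
        (∀ n, g (e n) = f (x n)) ∧ ‖g‖ ≤ A * ‖f‖)
    -- {h_{n,i}} is an associated approximative Xd-Bessel sequence (bound B,
    -- analysis operator S) with K(x) = lim_n Σ_{i=1}^{m_n} h_{n,i}(x) x_i
    (m : ℕ → ℕ)
    (h : ℕ → ℕ → (X →L[ℝ] ℝ)) (S : X →L[ℝ] Xd)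
    (hS : ∀ z : X,
      Tendsto (fun n => ∑ i ∈ Finset.range (m n), h n i z • e i) atTop (nhds (S z)))
    (hKexp : ∀ z : X,
      Tendsto (fun n => ∑ i ∈ Finset.range (m n), h n i z • x i) atTop (nhds (K z))) :
    ∃ T : Xd →L[ℝ] X, (∀ n, T (e n) = x n) ∧
      Set.range (adjB (adjB K)) ⊆ Set.range (adjB (adjB T)) := by
  obtain ⟨T, hTe⟩ := exists_clm_apply_eq_of_norm_sum_smul_le (le_max_right A 0) hcoord_e hbasis
    (norm_sum_smul_le_of_bessel hBessel)
  refine ⟨T, hTe, ?_⟩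
  rw [eq_comp_of_tendsto_sum_smul hTe hS hKexp]
  exact range_adjB_adjB_comp_subset T S

theorem stmt13 {X Xd : Type*}
    [NormedAddCommGroup X] [NormedSpace ℝ X] [CompleteSpace X]
    [NormedAddCommGroup Xd] [NormedSpace ℝ Xd] [CompleteSpace Xd]
    (coord : ℕ → (Xd →L[ℝ] ℝ)) (e : ℕ → Xd)
    (hcoord_e : ∀ k n, coord k (e n) = if k = n then (1 : ℝ) else 0)
    (hbasis : ∀ c : Xd,
      Tendsto (fun N => ∑ k ∈ Finset.range N, coord k c • e k) atTop (nhds c))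
    (x : ℕ → X) (K : X →L[ℝ] X)
    -- {x_n} is a Bessel sequence for X with respect to Xd
    (A : ℝ) (hBessel : ∀ f : X →L[ℝ] ℝ, ∃ g : Xd →L[ℝ] ℝ,
        (∀ n, g (e n) = f (x n)) ∧ ‖g‖ ≤ A * ‖f‖)
    -- {h_{n,i}} is an associated approximative Xd-Bessel sequence (bound B,
    -- analysis operator S) with K(x) = lim_n Σ_{i=1}^{m_n} h_{n,i}(x) x_i
    (m : ℕ → ℕ) (hm : StrictMono m) (hm0 : 0 < m 0)
    (h : ℕ → ℕ → (X →L[ℝ] ℝ)) (S : X →L[ℝ] Xd)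
    (hS : ∀ z : X,
      Tendsto (fun n => ∑ i ∈ Finset.range (m n), h n i z • e i) atTop (nhds (S z)))
    (B : ℝ) (hB : 0 < B) (hSB : ∀ z : X, ‖S z‖ ≤ B * ‖z‖)
    (hKexp : ∀ z : X,
      Tendsto (fun n => ∑ i ∈ Finset.range (m n), h n i z • x i) atTop (nhds (K z))) :
    ∃ T : Xd →L[ℝ] X, (∀ n, T (e n) = x n) ∧
      Set.range (adjB (adjB K)) ⊆ Set.range (adjB (adjB T)) :=
  stmt13_general coord e hcoord_e hbasis x K A hBessel m h S hS hKexp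
end

section
/- Let {x_n} be a frame for X with respect to X_d and suppose there exists an approximative X_d-Bessel sequence {h_{n,i}} such that x = lim_{n→∞} Σ_{i=1}^{m_n} h_{n,i}(x) x_i for all x ∈ X. Then every complemented closed subspace M of X has an approximative family of local atoms: namely, with P a projection onto M, the sequence {P(x_n)} is a frame for M, a Bessel sequence for X, and there exists an approximative X_d-Bessel sequence {f_{n,i}} for M such that x = lim_{n→∞} Σ_{i=1}^{m_n} f_{n,i}(x) P(x_i) for all x ∈ M. -/
open Filter Topology

/-! The synthesis operator `T` sends `e n` to `x n`, so every `g` with `g (e n) = f (P (x n))`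
equals `f ∘ P ∘ T` by continuity on the basis expansion. This gives the upper bound with constant
`‖P‖ ‖T‖`, and the lower bound on `M*` comes from the open mapping theorem for `T` together with
`P = id` on `M`. The reconstruction on `M` is the image under `P` of the reconstruction on `X`,
with the same coefficient functionals. -/

section Synthesis

variable {𝕜 X Xd : Type*} [NontriviallyNormedField 𝕜]
  [NormedAddCommGroup X] [NormedSpace 𝕜 X] [NormedAddCommGroup Xd] [NormedSpace 𝕜 Xd]
  {coord : ℕ → (Xd →L[𝕜] 𝕜)} {e : ℕ → Xd} {x : ℕ → X} {T : Xd →L[𝕜] X}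

theorem synthesis_apply_basis
    (hcoord_e : ∀ k n, coord k (e n) = if k = n then (1 : 𝕜) else 0)
    (hT : ∀ c : Xd,
      Tendsto (fun N => ∑ k ∈ Finset.range N, coord k c • x k) atTop (𝓝 (T c)))
    (n : ℕ) : T (e n) = x n := by
  refine tendsto_nhds_unique (hT (e n)) (tendsto_const_nhds.congr' ?_)
  filter_upwards [eventually_gt_atTop n] with N hN
  rw [Finset.sum_eq_single_of_mem n (Finset.mem_range.2 hN) fun k _ hkn => by simp [hcoord_e, hkn]]
  simp [hcoord_e]

theorem eq_comp_synthesis_of_apply_basis {F : Type*} [NormedAddCommGroup F] [NormedSpace 𝕜 F]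
    (hbasis : ∀ c : Xd,
      Tendsto (fun N => ∑ k ∈ Finset.range N, coord k c • e k) atTop (𝓝 c))
    (hT : ∀ c : Xd,
      Tendsto (fun N => ∑ k ∈ Finset.range N, coord k c • x k) atTop (𝓝 (T c)))
    {g : Xd →L[𝕜] F} {φ : X →L[𝕜] F} (hg : ∀ n, g (e n) = φ (x n)) :
    g = φ.comp T := by
  ext c
  have hgc := (g.continuous.tendsto c).comp (hbasis c)
  have hφc := (φ.continuous.tendsto (T c)).comp (hT c)
  refine tendsto_nhds_unique hgc (hφc.congr fun N => ?_)
  simp [map_sum, map_smul, hg]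

end Synthesis

theorem exists_bessel_bound_of_apply_basis {𝕜 Y Xd : Type*} [NontriviallyNormedField 𝕜]
    [NormedAddCommGroup Y] [NormedSpace 𝕜 Y] [NormedAddCommGroup Xd] [NormedSpace 𝕜 Xd]
    {e : ℕ → Xd} {y : ℕ → Y} (U : Xd →L[𝕜] Y) (hU : ∀ n, U (e n) = y n) :
    ∃ B : ℝ, 0 < B ∧ ∀ f : Y →L[𝕜] 𝕜, ∃ g : Xd →L[𝕜] 𝕜,
      (∀ n, g (e n) = f (y n)) ∧ ‖g‖ ≤ B * ‖f‖ := by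
  refine ⟨‖U‖ + 1, by positivity, fun f => ⟨f.comp U, fun n => by simp [hU], ?_⟩⟩
  calc ‖f.comp U‖ ≤ ‖f‖ * ‖U‖ := f.opNorm_comp_le U
    _ ≤ (‖U‖ + 1) * ‖f‖ := by nlinarith [norm_nonneg f]

theorem ContinuousLinearMap.exists_pos_mul_norm_le_norm_comp_of_surjective
    {𝕜 X Xd F : Type*} [NontriviallyNormedField 𝕜]
    [NormedAddCommGroup X] [NormedSpace 𝕜 X] [CompleteSpace X]
    [NormedAddCommGroup Xd] [NormedSpace 𝕜 Xd] [CompleteSpace Xd]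
    [NormedAddCommGroup F] [NormedSpace 𝕜 F]
    (T : Xd →L[𝕜] X) (hT : Function.Surjective T) :
    ∃ A : ℝ, 0 < A ∧ ∀ φ : X →L[𝕜] F, A * ‖φ‖ ≤ ‖φ.comp T‖ := by
  obtain ⟨C, hC, hpre⟩ := T.exists_preimage_norm_le hT
  refine ⟨C⁻¹, by positivity, fun φ => ?_⟩
  rw [inv_mul_le_iff₀ hC]
  refine φ.opNorm_le_bound (by positivity) fun z => ?_
  obtain ⟨c, rfl, hc⟩ := hpre z
  calc ‖φ (T c)‖ = ‖φ.comp T c‖ := rfl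
    _ ≤ ‖φ.comp T‖ * ‖c‖ := (φ.comp T).le_opNorm c
    _ ≤ ‖φ.comp T‖ * (C * ‖T c‖) := by gcongr
    _ = C * ‖φ.comp T‖ * ‖T c‖ := by ring

theorem ContinuousLinearMap.norm_comp_subtypeL_le_norm_comp
    {𝕜 X F : Type*} [NontriviallyNormedField 𝕜]
    [NormedAddCommGroup X] [NormedSpace 𝕜 X] [NormedAddCommGroup F] [NormedSpace 𝕜 F]
    {M : Submodule 𝕜 X} {P : X →L[𝕜] X} (hPid : ∀ z ∈ M, P z = z) (φ : X →L[𝕜] F) :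
    ‖φ.comp M.subtypeL‖ ≤ ‖φ.comp P‖ := by
  have hrestrict : φ.comp M.subtypeL = (φ.comp P).comp M.subtypeL := by
    ext z
    simp [hPid z z.2]
  calc ‖φ.comp M.subtypeL‖ = ‖(φ.comp P).comp M.subtypeL‖ := by rw [hrestrict]
    _ ≤ ‖φ.comp P‖ * ‖M.subtypeL‖ := (φ.comp P).opNorm_comp_le _
    _ ≤ ‖φ.comp P‖ := mul_le_of_le_one_right (norm_nonneg _) M.norm_subtypeL_le

theorem stmt16_general {X Xd : Type*}
    [NormedAddCommGroup X] [NormedSpace ℝ X] [CompleteSpace X]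
    [NormedAddCommGroup Xd] [NormedSpace ℝ Xd] [CompleteSpace Xd]
    (coord : ℕ → (Xd →L[ℝ] ℝ)) (e : ℕ → Xd)
    (hcoord_e : ∀ k n, coord k (e n) = if k = n then (1 : ℝ) else 0)
    (hbasis : ∀ c : Xd,
      Tendsto (fun N => ∑ k ∈ Finset.range N, coord k c • e k) atTop (nhds c))
    (x : ℕ → X)
    -- {x_n} is a frame: the synthesis operator T is bounded and onto
    (T : Xd →L[ℝ] X)
    (hT : ∀ c : Xd,
      Tendsto (fun N => ∑ n ∈ Finset.range N, coord n c • x n) atTop (nhds (T c)))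
    (hTonto : Function.Surjective T)
    -- an approximative Xd-Bessel sequence {h_{n,i}} reconstructing the identity
    (m : ℕ → ℕ) (hm : StrictMono m) (hm0 : 0 < m 0)
    (h : ℕ → ℕ → (X →L[ℝ] ℝ)) (S : X →L[ℝ] Xd)
    (hS : ∀ z : X,
      Tendsto (fun n => ∑ i ∈ Finset.range (m n), h n i z • e i) atTop (nhds (S z)))
    (hexp : ∀ z : X,
      Tendsto (fun n => ∑ i ∈ Finset.range (m n), h n i z • x i) atTop (nhds z))
    -- M a complemented closed subspace with continuous projection P onto M
    (M : Submodule ℝ X)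
    (P : X →L[ℝ] X) (hPid : ∀ z ∈ M, P z = z) :
    -- {P(x_n)} is a Bessel sequence for X with respect to Xd
    (∃ B : ℝ, 0 < B ∧ ∀ f : X →L[ℝ] ℝ, ∃ g : Xd →L[ℝ] ℝ,
        (∀ n, g (e n) = f (P (x n))) ∧ ‖g‖ ≤ B * ‖f‖) ∧
    -- {P(x_n)} is a frame for M: lower frame inequality on M*
    (∃ A : ℝ, 0 < A ∧ ∀ (f : X →L[ℝ] ℝ) (g : Xd →L[ℝ] ℝ),
        (∀ n, g (e n) = f (P (x n))) → A * ‖f.comp M.subtypeL‖ ≤ ‖g‖) ∧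
    -- M has an approximative family of local atoms {P(x_n)}, {f_{n,i}}
    (∃ (m' : ℕ → ℕ) (f : ℕ → ℕ → (X →L[ℝ] ℝ)) (S' : X →L[ℝ] Xd),
      StrictMono m' ∧ 0 < m' 0 ∧
      (∀ z ∈ M, Tendsto (fun n => ∑ i ∈ Finset.range (m' n), f n i z • e i)
        atTop (nhds (S' z))) ∧
      (∀ z ∈ M, Tendsto (fun n => ∑ i ∈ Finset.range (m' n), f n i z • P (x i))
        atTop (nhds z))) := by
  have hTe := synthesis_apply_basis hcoord_e hT
  refine ⟨exists_bessel_bound_of_apply_basis (P.comp T) fun n => by simp [hTe], ?_,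
    m, h, S, hm, hm0, fun z _ => hS z, fun z hz => ?_⟩
  · obtain ⟨A, hA, hAT⟩ := T.exists_pos_mul_norm_le_norm_comp_of_surjective (F := ℝ) hTonto
    refine ⟨A, hA, fun f g hg => ?_⟩
    calc A * ‖f.comp M.subtypeL‖ ≤ A * ‖f.comp P‖ := by
          gcongr; exact ContinuousLinearMap.norm_comp_subtypeL_le_norm_comp hPid f
      _ ≤ ‖(f.comp P).comp T‖ := hAT _
      _ = ‖g‖ := by rw [eq_comp_synthesis_of_apply_basis (φ := f.comp P) hbasis hT hg]
  · simpa [Function.comp_def, map_sum, map_smul, hPid z hz] using (P.continuous.tendsto z).comp (hexp z)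

theorem stmt16 {X Xd : Type*}
    [NormedAddCommGroup X] [NormedSpace ℝ X] [CompleteSpace X]
    [NormedAddCommGroup Xd] [NormedSpace ℝ Xd] [CompleteSpace Xd]
    (coord : ℕ → (Xd →L[ℝ] ℝ)) (e : ℕ → Xd)
    (hcoord_e : ∀ k n, coord k (e n) = if k = n then (1 : ℝ) else 0)
    (hbasis : ∀ c : Xd,
      Tendsto (fun N => ∑ k ∈ Finset.range N, coord k c • e k) atTop (nhds c))
    (x : ℕ → X)
    -- {x_n} is a frame: the synthesis operator T is bounded and onto
    (T : Xd →L[ℝ] X)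
    (hT : ∀ c : Xd,
      Tendsto (fun N => ∑ n ∈ Finset.range N, coord n c • x n) atTop (nhds (T c)))
    (hTonto : Function.Surjective T)
    -- an approximative Xd-Bessel sequence {h_{n,i}} reconstructing the identity
    (m : ℕ → ℕ) (hm : StrictMono m) (hm0 : 0 < m 0)
    (h : ℕ → ℕ → (X →L[ℝ] ℝ)) (S : X →L[ℝ] Xd)
    (hS : ∀ z : X,
      Tendsto (fun n => ∑ i ∈ Finset.range (m n), h n i z • e i) atTop (nhds (S z)))
    (hexp : ∀ z : X,
      Tendsto (fun n => ∑ i ∈ Finset.range (m n), h n i z • x i) atTop (nhds z))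
    -- M a complemented closed subspace with continuous projection P onto M
    (M : Submodule ℝ X) (hM : IsClosed (M : Set X))
    (P : X →L[ℝ] X) (hPmem : ∀ z : X, P z ∈ M) (hPid : ∀ z ∈ M, P z = z) :
    -- {P(x_n)} is a Bessel sequence for X with respect to Xd
    (∃ B : ℝ, 0 < B ∧ ∀ f : X →L[ℝ] ℝ, ∃ g : Xd →L[ℝ] ℝ,
        (∀ n, g (e n) = f (P (x n))) ∧ ‖g‖ ≤ B * ‖f‖) ∧
    -- {P(x_n)} is a frame for M: lower frame inequality on M*
    (∃ A : ℝ, 0 < A ∧ ∀ (f : X →L[ℝ] ℝ) (g : Xd →L[ℝ] ℝ),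
        (∀ n, g (e n) = f (P (x n))) → A * ‖f.comp M.subtypeL‖ ≤ ‖g‖) ∧
    -- M has an approximative family of local atoms {P(x_n)}, {f_{n,i}}
    (∃ (m' : ℕ → ℕ) (f : ℕ → ℕ → (X →L[ℝ] ℝ)) (S' : X →L[ℝ] Xd),
      StrictMono m' ∧ 0 < m' 0 ∧
      (∀ z ∈ M, Tendsto (fun n => ∑ i ∈ Finset.range (m' n), f n i z • e i)
        atTop (nhds (S' z))) ∧
      (∀ z ∈ M, Tendsto (fun n => ∑ i ∈ Finset.range (m' n), f n i z • P (x i))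
        atTop (nhds z))) :=
  stmt16_general coord e hcoord_e hbasis x T hT hTonto m hm hm0 h S hS hexp M P hPid
end
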